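/- Let G be a connected graph with girth g ≥ 2m+1 and cyclomatic number ℓ_G ≥ 1, containing a vertex at distance at least m from some shortest cycle. Then G contains the graph H(g, m) (a cycle of length g with a pendant path of length m attached at one vertex) as a subgraph, and hence λ₁(G) ≥ λ₁(T(m,m,m)). -/

import Mathlib

/-!
Let `x` be a vertex of the given `g`-cycle nearest to the far vertex `u`. A shortest path from `x`
to `u` has length at least `m`, and its vertices after `x` are strictly closer to `u` than `x`,
hence off the cycle; the cycle read from `x` together with the first `m` edges of this path is a
copy of `H(g, m)`. Since `2m + 1 ≤ g`, two legs of `T(m,m,m)` fit around the cycle in opposite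
directions and the third along the path, so `T(m,m,m) ⊆ H(g, m) ⊆ G`.

For the spectral bound, let `x` be an eigenvector for `λ₁(H)` and push `|x|` forward along the
injective homomorphism `H → G`, extending by zero. Since adjacency matrices are nonnegative and the
entries of `A(H)` are dominated by those of `A(G)`, the quadratic form of `A(G)` at this vector is
at least `λ₁(H) ‖x‖²`, while it is at most `λ₁(G) ‖x‖²`.
-/

open scoped Classical

/-- The real adjacency matrix of a finite simple graph. -/
noncomputable def adjMat {V : Type*} [Fintype V] [DecidableEq V] (G : SimpleGraph V) :
    Matrix V V ℝ :=
  Matrix.of fun u v => if G.Adj u v then (1 : ℝ) else 0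

/-- The eigenvalues (roots of the characteristic polynomial, with multiplicity) of a real
matrix, listed in nondecreasing order. -/
noncomputable def eigList {V : Type*} [Fintype V] [DecidableEq V] (A : Matrix V V ℝ) : List ℝ :=
  A.charpoly.roots.sort (· ≤ ·)

/-- The `k`-th largest eigenvalue (with multiplicity) of `A`, 1-indexed:
`eig A 1 ≥ eig A 2 ≥ …`. -/
noncomputable def eig {V : Type*} [Fintype V] [DecidableEq V] (A : Matrix V V ℝ) (k : ℕ) : ℝ :=
  (eigList A).getD ((eigList A).length - k) 0

/-- The `k`-th largest adjacency eigenvalue of a finite simple graph (`λₖ(G)`). -/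
noncomputable def graphEig {V : Type*} [Fintype V] [DecidableEq V] (G : SimpleGraph V)
    (k : ℕ) : ℝ :=
  eig (adjMat G) k

/-- The multiplicity of `μ` as an eigenvalue of `A` (dimension of the eigenspace). -/
noncomputable def eigMult {V : Type*} [Fintype V] [DecidableEq V] (A : Matrix V V ℝ)
    (μ : ℝ) : ℕ :=
  Module.finrank ℝ (LinearMap.ker (A.mulVecLin - μ • LinearMap.id))

/-- The number of edges of a finite simple graph. -/
noncomputable def edgeCount {V : Type*} [Fintype V] (G : SimpleGraph V) : ℕ :=
  G.edgeSet.toFinite.toFinset.card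

/-- The cyclomatic number `|E| - |V| + 1` of a (connected) finite graph. -/
noncomputable def cyclomatic {V : Type*} [Fintype V] (G : SimpleGraph V) : ℕ :=
  edgeCount G + 1 - Fintype.card V

/-- The maximum degree of a finite simple graph. -/
noncomputable def maxDeg {V : Type*} [Fintype V] (G : SimpleGraph V) : ℕ :=
  Finset.univ.sup fun v => (G.neighborSet v).toFinite.toFinset.card

/-- The spider `T(ℓ,ℓ,ℓ)`: three paths of length `ℓ` (in edges) sharing exactly their
initial vertex `none`. -/
def spider (ℓ : ℕ) : SimpleGraph (Option (Fin 3 × Fin ℓ)) :=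
  SimpleGraph.fromRel fun u v =>
    match u, v with
    | none, some (_, j) => (j : ℕ) = 0
    | some (i, j), some (i', j') => i = i' ∧ (j' : ℕ) = (j : ℕ) + 1
    | _, _ => False

/-- `H(p,q)`: a cycle of length `p` on `Fin p` with a pendant path of length `q` (in
edges) attached at the vertex `Sum.inl 0`; the path vertices are `Fin q`. -/
def cycleWithPath (p q : ℕ) : SimpleGraph (Fin p ⊕ Fin q) :=
  SimpleGraph.fromRel fun u v =>
    match u, v with
    | Sum.inl i, Sum.inl j => (j : ℕ) = ((i : ℕ) + 1) % p
    | Sum.inl i, Sum.inr j => (i : ℕ) = 0 ∧ (j : ℕ) = 0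
    | Sum.inr i, Sum.inr j => (j : ℕ) = (i : ℕ) + 1
    | _, _ => False

open Matrix Function

section Spectral

variable {n : Type*} [Fintype n] {A : Matrix n n ℝ}

open scoped MatrixOrder in
lemma dotProduct_mulVec_le_of_eigenvalues_le [DecidableEq n] (hA : A.IsHermitian) {c : ℝ}
    (hc : ∀ i, hA.eigenvalues i ≤ c) (x : n → ℝ) : x ⬝ᵥ A *ᵥ x ≤ c * (x ⬝ᵥ x) := by
  have hle : A ≤ algebraMap ℝ _ c := le_algebraMap_of_spectrum_le (by
    rw [hA.spectrum_real_eq_range_eigenvalues]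
    rintro _ ⟨i, rfl⟩
    exact hc i) hA.isSelfAdjoint
  have hgap := (Matrix.le_iff.mp hle).dotProduct_mulVec_nonneg x
  rw [Algebra.algebraMap_eq_smul_one, sub_mulVec, smul_mulVec, one_mulVec, dotProduct_sub,
    dotProduct_smul, star_trivial, smul_eq_mul] at hgap
  linarith

lemma eig_one_isGreatest [DecidableEq n] [Nonempty n] (hA : A.IsHermitian) :
    IsGreatest (Set.range hA.eigenvalues) (eig A 1) := by
  have hmem : ∀ a, a ∈ eigList A ↔ a ∈ Set.range hA.eigenvalues := by
    simp [eigList, hA.roots_charpoly_eq_eigenvalues]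
  have hne : eigList A ≠ [] :=
    List.ne_nil_of_mem ((hmem _).mpr ⟨Classical.arbitrary n, rfl⟩)
  have heig : eig A 1 = (eigList A).getLast hne := by
    rw [eig, List.getLast_eq_getElem, List.getD_eq_getElem]
  rw [heig]
  exact ⟨(hmem _).mp (List.getLast_mem _),
    fun _ ha ↦ (Multiset.pairwise_sort _ _).rel_getLast ((hmem _).mpr ha)⟩

lemma exists_mulVec_eq_eig_one_smul [DecidableEq n] [Nonempty n] (hA : A.IsHermitian) :
    ∃ x : n → ℝ, x ≠ 0 ∧ A *ᵥ x = eig A 1 • x := by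
  obtain ⟨⟨i, hi⟩, -⟩ := eig_one_isGreatest hA
  refine ⟨hA.eigenvectorBasis i, fun h ↦ hA.eigenvectorBasis.orthonormal.ne_zero i ?_, ?_⟩
  · exact WithLp.ofLp_injective _ h
  · rw [← hi]
    exact hA.mulVec_eigenvectorBasis i

lemma dotProduct_mulVec_le_abs {B : Matrix n n ℝ} (hA : ∀ i j, 0 ≤ A i j)
    (hAB : ∀ i j, A i j ≤ B i j) (x : n → ℝ) : x ⬝ᵥ A *ᵥ x ≤ |x| ⬝ᵥ B *ᵥ |x| := by
  simp only [dotProduct, mulVec, Finset.mul_sum, Pi.abs_apply]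
  refine Finset.sum_le_sum fun i _ ↦ Finset.sum_le_sum fun j _ ↦ ?_
  calc x i * (A i j * x j) ≤ |x i * (A i j * x j)| := le_abs_self _
    _ = |x i| * (A i j * |x j|) := by rw [abs_mul, abs_mul, abs_of_nonneg (hA i j)]
    _ ≤ |x i| * (B i j * |x j|) := by gcongr; exact hAB i j

end Spectral

section

variable {W V : Type*} [Fintype W] [Fintype V] {φ : W → V}

lemma extend_dotProduct (hφ : Injective φ) (z : W → ℝ) (v : V → ℝ) :
    extend φ z 0 ⬝ᵥ v = z ⬝ᵥ (v ∘ φ) :=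
  (Fintype.sum_of_injective φ hφ _ _ (fun b hb ↦ by simp [extend_apply' _ _ _ (by simpa using hb)])
    (fun a ↦ by simp [hφ.extend_apply])).symm

lemma mulVec_extend_comp (hφ : Injective φ) (B : Matrix V V ℝ) (z : W → ℝ) :
    (B *ᵥ extend φ z 0) ∘ φ = B.submatrix φ φ *ᵥ z := by
  ext a
  change B (φ a) ⬝ᵥ extend φ z 0 = (fun j ↦ B (φ a) (φ j)) ⬝ᵥ z
  rw [dotProduct_comm, extend_dotProduct hφ, dotProduct_comm]
  rfl

end

lemma eig_one_le_of_le_submatrix {W V : Type*} [Fintype W] [DecidableEq W] [Nonempty W]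
    [Fintype V] [DecidableEq V] {A : Matrix W W ℝ} {B : Matrix V V ℝ} (hA : A.IsHermitian)
    (hB : B.IsHermitian) {φ : W → V} (hφ : Injective φ) (hA0 : ∀ i j, 0 ≤ A i j)
    (hAB : ∀ i j, A i j ≤ B (φ i) (φ j)) : eig A 1 ≤ eig B 1 := by
  have : Nonempty V := ⟨φ (Classical.arbitrary W)⟩
  obtain ⟨x, hx0, hx⟩ := exists_mulVec_eq_eig_one_smul hA
  set y := extend φ |x| 0
  have hyy : y ⬝ᵥ y = x ⬝ᵥ x := by
    rw [extend_dotProduct hφ, extend_comp hφ]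
    simp [dotProduct, abs_mul_abs_self]
  have hxx : 0 < x ⬝ᵥ x := by simpa using dotProduct_self_star_pos_iff.mpr hx0
  refine le_of_mul_le_mul_right ?_ hxx
  calc eig A 1 * (x ⬝ᵥ x) = x ⬝ᵥ A *ᵥ x := by rw [hx, dotProduct_smul, smul_eq_mul]
    _ ≤ |x| ⬝ᵥ B.submatrix φ φ *ᵥ |x| := dotProduct_mulVec_le_abs hA0 hAB x
    _ = y ⬝ᵥ B *ᵥ y := by rw [extend_dotProduct hφ, mulVec_extend_comp hφ]
    _ ≤ eig B 1 * (y ⬝ᵥ y) :=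
      dotProduct_mulVec_le_of_eigenvalues_le hB (fun i ↦ (eig_one_isGreatest hB).2 ⟨i, rfl⟩) y
    _ = eig B 1 * (x ⬝ᵥ x) := by rw [hyy]

lemma adjMat_isHermitian {V : Type*} [Fintype V] [DecidableEq V] (G : SimpleGraph V) :
    (adjMat G).IsHermitian := by
  ext i j
  simp [adjMat, G.adj_comm]

lemma adjMat_nonneg {V : Type*} [Fintype V] [DecidableEq V] (G : SimpleGraph V) (i j : V) :
    0 ≤ adjMat G i j := by
  simp only [adjMat, of_apply]
  split_ifs <;> norm_num

lemma adjMat_le_adjMat_map {W V : Type*} [Fintype W] [DecidableEq W] [Fintype V] [DecidableEq V]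
    {H : SimpleGraph W} {G : SimpleGraph V} (φ : H →g G) (i j : W) :
    adjMat H i j ≤ adjMat G (φ i) (φ j) := by
  by_cases h : H.Adj i j
  · simp [adjMat, h, φ.map_adj h]
  · simpa [adjMat, h] using adjMat_nonneg G (φ i) (φ j)

theorem graphEig_one_le_of_injective {W V : Type*} [Fintype W] [DecidableEq W] [Nonempty W]
    [Fintype V] [DecidableEq V] {H : SimpleGraph W} {G : SimpleGraph V} (φ : H →g G)
    (hφ : Injective φ) : graphEig H 1 ≤ graphEig G 1 :=
  eig_one_le_of_le_submatrix (adjMat_isHermitian H) (adjMat_isHermitian G) hφ (adjMat_nonneg H)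
    (adjMat_le_adjMat_map φ)

namespace SimpleGraph

variable {α β : Type*} {G : SimpleGraph β}

def fromRelHom {r : α → α → Prop} (f : α → β)
    (hf : ∀ ⦃a b⦄, a ≠ b → r a b → G.Adj (f a) (f b)) : fromRel r →g G where
  toFun := f
  map_rel' := by
    rintro a b ⟨hne, hab | hba⟩
    exacts [hf hne hab, (hf hne.symm hba).symm]

def spiderToCycleWithPath {p q : ℕ} (h : 2 * q + 1 ≤ p) :
    Option (Fin 3 × Fin q) → Fin p ⊕ Fin q
  | none => .inl ⟨0, by omega⟩
  | some (i, j) => ![.inl ⟨j + 1, by omega⟩, .inl ⟨p - 1 - j, by omega⟩, .inr j] i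

lemma spiderToCycleWithPath_injective {p q : ℕ} (h : 2 * q + 1 ≤ p) :
    Injective (spiderToCycleWithPath h) := by
  rintro (_ | ⟨i, j⟩) (_ | ⟨i', j'⟩) hij <;> (try fin_cases i) <;> (try fin_cases i') <;>
    simp_all [spiderToCycleWithPath, Fin.ext_iff] <;> omega

lemma exists_injective_spider_hom_cycleWithPath {p q : ℕ} (h : 2 * q + 1 ≤ p) :
    ∃ ψ : spider q →g cycleWithPath p q, Injective ψ := by
  refine ⟨fromRelHom (spiderToCycleWithPath h) fun a b hne hab ↦ ?_,
    spiderToCycleWithPath_injective h⟩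
  rw [cycleWithPath, fromRel_adj]
  refine ⟨(spiderToCycleWithPath_injective h).ne hne, ?_⟩
  rcases a with _ | ⟨i, j⟩ <;> rcases b with _ | ⟨i', j'⟩
  · exact hab.elim
  · have hj' : (j' : ℕ) = 0 := hab
    have := j'.isLt
    fin_cases i' <;> simp only [spiderToCycleWithPath] <;> norm_num
    · left; rw [Nat.mod_eq_of_lt (by omega)]; omega
    · right; rw [show p - 1 - j' + 1 = p by omega, Nat.mod_self]
    · exact hj'
  · exact hab.elim
  · obtain ⟨rfl, hj⟩ := hab
    have := j'.isLt
    fin_cases i <;> simp only [spiderToCycleWithPath] <;> norm_num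
    · left; rw [Nat.mod_eq_of_lt (by omega)]; omega
    · right; rw [Nat.mod_eq_of_lt (by omega)]; omega
    · exact .inl hj

namespace Walk

variable {V : Type*} {G : SimpleGraph V}

lemma getVert_mod_length {x : V} (c : G.Walk x x) {k : ℕ} (hk : k ≤ c.length) :
    c.getVert (k % c.length) = c.getVert k := by
  rcases hk.lt_or_eq with hk | rfl
  · rw [Nat.mod_eq_of_lt hk]
  · rw [Nat.mod_self, getVert_zero, getVert_length]

lemma getVert_notMem_of_forall_dist_le {S : Set V} {x u : V} {r : G.Walk x u}
    (hr : r.length = G.dist x u) (hmin : ∀ y ∈ S, G.dist u x ≤ G.dist u y) {j : ℕ}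
    (hj : 1 ≤ j) (hjr : j ≤ r.length) : r.getVert j ∉ S := by
  intro hS
  have hdrop : G.dist (r.getVert j) u ≤ r.length - j :=
    (dist_le (r.drop j)).trans_eq (r.drop_length j)
  have := hmin _ hS
  rw [G.dist_comm] at hr hdrop
  omega

theorem _root_.SimpleGraph.Connected.exists_isPath_from_nearest (hG : G.Connected) (s : Finset V)
    (hs : s.Nonempty) (u : V) : ∃ x ∈ s, ∃ r : G.Walk x u, r.IsPath ∧ r.length = G.dist u x ∧
      ∀ j, 1 ≤ j → j ≤ r.length → r.getVert j ∉ s := by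
  obtain ⟨x, hx, hmin⟩ := s.exists_min_image (G.dist u) hs
  obtain ⟨r, hr, hrlen⟩ := hG.exists_path_of_dist x u
  exact ⟨x, hx, r, hr, hrlen.trans G.dist_comm, fun j hj hjr ↦
    getVert_notMem_of_forall_dist_le (S := s) hrlen hmin hj hjr⟩

theorem IsCycle.exists_injective_cycleWithPath_hom {x y : V} {c : G.Walk x x} (hc : c.IsCycle)
    {r : G.Walk x y} (hr : r.IsPath) {q : ℕ} (hq : q ≤ r.length)
    (hdisj : ∀ j, 1 ≤ j → j ≤ q → r.getVert j ∉ c.support) :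
    ∃ φ : cycleWithPath c.length q →g G, Injective φ := by
  have hf : Injective (Sum.elim (fun i : Fin c.length ↦ c.getVert i)
      (fun j : Fin q ↦ r.getVert (j + 1))) := by
    rintro (i | i) (j | j) h <;> simp only [Sum.elim_inl, Sum.elim_inr] at h
    · exact congrArg Sum.inl (Fin.ext (hc.getVert_injOn' (by simp; omega) (by simp; omega) h))
    · exact (hdisj _ le_add_self (by omega) (h ▸ c.getVert_mem_support i)).elim
    · exact (hdisj _ le_add_self (by omega) (h ▸ c.getVert_mem_support j)).elim
    · have := hr.getVert_injOn (by simp; omega) (by simp; omega) h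
      exact congrArg Sum.inr (Fin.ext (by omega))
  refine ⟨fromRelHom _ fun a b _ hab ↦ ?_, hf⟩
  rcases a with i | i <;> rcases b with j | j
  · have hj : (j : ℕ) = (i + 1) % c.length := hab
    simp only [hj, getVert_mod_length c i.isLt]
    exact c.adj_getVert_succ i.isLt
  · obtain ⟨hi, hj⟩ : (i : ℕ) = 0 ∧ (j : ℕ) = 0 := hab
    simp only [hi, hj, getVert_zero]
    simpa using r.adj_getVert_succ (i := 0) (by omega)
  · exact hab.elim
  · have hj : (j : ℕ) = i + 1 := hab
    simp only [hj]
    exact r.adj_getVert_succ (by omega)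

end Walk

end SimpleGraph

theorem contains_cycle_with_path_general {V : Type*} [Fintype V] [DecidableEq V]
    (G : SimpleGraph V) (hG : G.Connected) (g m : ℕ) (hg : 2 * m + 1 ≤ g)
    (hfar : ∃ (u w : V) (p : G.Walk w w), p.IsCycle ∧ p.length = g ∧
      ∀ x ∈ p.support, m ≤ G.dist u x) :
    (∃ φ : cycleWithPath g m →g G, Function.Injective φ) ∧
      graphEig (spider m) 1 ≤ graphEig G 1 := by
  obtain ⟨u, w, p, hp, rfl, hfar⟩ := hfar
  obtain ⟨x, hx, r, hr, hrlen, hr_off⟩ :=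
    hG.exists_isPath_from_nearest p.support.toFinset ⟨w, by simp⟩ u
  rw [List.mem_toFinset] at hx
  have hmr : m ≤ r.length := hrlen ▸ hfar x hx
  have hH : ∃ φ : cycleWithPath p.length m →g G, Injective φ := by
    rw [← SimpleGraph.Walk.length_rotate p x hx]
    refine (hp.rotate hx).exists_injective_cycleWithPath_hom hr hmr fun j hj hjm ↦ ?_
    simpa [SimpleGraph.Walk.mem_support_rotate_iff] using hr_off j hj (hjm.trans hmr)
  obtain ⟨φ, hφ⟩ := hH
  obtain ⟨ψ, hψ⟩ := SimpleGraph.exists_injective_spider_hom_cycleWithPath hg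
  exact ⟨⟨φ, hφ⟩, graphEig_one_le_of_injective (φ.comp ψ) (hφ.comp hψ)⟩

/-- If `G` is connected with girth `g ≥ 2m+1`, cyclomatic number at least
`1`, and there is a vertex at distance at least `m` from some shortest cycle, then `G`
contains `H(g,m)` as a subgraph, and hence `λ₁(G) ≥ λ₁(T(m,m,m))`. -/
theorem contains_cycle_with_path {V : Type*} [Fintype V] [DecidableEq V]
    (G : SimpleGraph V) (hG : G.Connected) (g m : ℕ)
    (hgirth : G.girth = (g : ℕ∞)) (hg : 2 * m + 1 ≤ g) (hcyc : 1 ≤ cyclomatic G)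
    (hfar : ∃ (u w : V) (p : G.Walk w w), p.IsCycle ∧ p.length = g ∧
      ∀ x ∈ p.support, m ≤ G.dist u x) :
    (∃ φ : cycleWithPath g m →g G, Function.Injective φ) ∧
      graphEig (spider m) 1 ≤ graphEig G 1 :=
  contains_cycle_with_path_general G hG g m hg hfar
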